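/- arXiv:2112.02956 — 4 statements merged into one kernel-verified Lean document; each statement's English description precedes it below -/
import Mathlib

section
/- Let W be a real normed vector space, let μ ∈ [0, 1/2], let x, y ∈ W, set x' = x + μ(y − x), y' = y + μ(x − y), and let m = (x + y)/2. Then for every c ∈ W one has ‖x' − c‖ + ‖y' − c‖ ≤ ‖x − c‖ + ‖y − c‖ − 2‖x − x'‖ + 2‖m − c‖. -/
/-- Second inequality of Lemma 1 of the paper. -/
theorem deffuant_update_sum_dist_le_sub_add_midpoint
    {W : Type*} [NormedAddCommGroup W] [NormedSpace ℝ W]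
    (μ : ℝ) (hμ : μ ∈ Set.Icc (0 : ℝ) (1 / 2))
    (x y x' y' m : W)
    (hx' : x' = x + μ • (y - x)) (hy' : y' = y + μ • (x - y))
    (hm : m = (2 : ℝ)⁻¹ • (x + y))
    (c : W) :
    ‖x' - c‖ + ‖y' - c‖ ≤ ‖x - c‖ + ‖y - c‖ - 2 * ‖x - x'‖ + 2 * ‖m - c‖ := by
  obtain ⟨hμ0, hμ2⟩ := hμ
  have h2m : x + y = (2 : ℝ) • m := by
    rw [hm, smul_smul]; norm_num
  have e1 : x' - c = (1 - 2*μ) • (x - c) + (2*μ) • (m - c) := by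
    rw [hx', hm]; module
  have e2 : y' - c = (1 - 2*μ) • (y - c) + (2*μ) • (m - c) := by
    rw [hy', hm]; module
  have e3 : x - x' = (2*μ) • (x - m) := by
    rw [hx', hm]; module
  have hμ' : (0:ℝ) ≤ 1 - 2*μ := by linarith
  have hμ'' : (0:ℝ) ≤ 2*μ := by linarith
  have b1 : ‖x' - c‖ ≤ (1 - 2*μ) * ‖x - c‖ + (2*μ) * ‖m - c‖ := by
    rw [e1]
    calc _ ≤ ‖(1 - 2*μ) • (x - c)‖ + ‖(2*μ) • (m - c)‖ := norm_add_le _ _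
    _ = (1 - 2*μ) * ‖x - c‖ + (2*μ) * ‖m - c‖ := by
        rw [norm_smul, norm_smul, Real.norm_of_nonneg hμ', Real.norm_of_nonneg hμ'']
  have b2 : ‖y' - c‖ ≤ (1 - 2*μ) * ‖y - c‖ + (2*μ) * ‖m - c‖ := by
    rw [e2]
    calc _ ≤ ‖(1 - 2*μ) • (y - c)‖ + ‖(2*μ) • (m - c)‖ := norm_add_le _ _
    _ = (1 - 2*μ) * ‖y - c‖ + (2*μ) * ‖m - c‖ := by
        rw [norm_smul, norm_smul, Real.norm_of_nonneg hμ', Real.norm_of_nonneg hμ'']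
  have b3 : ‖x - x'‖ = (2*μ) * ‖x - m‖ := by
    rw [e3, norm_smul, Real.norm_of_nonneg hμ'']
  have b4 : 2 * ‖x - m‖ ≤ ‖x - c‖ + ‖y - c‖ := by
    have h : (2:ℝ) • (x - m) = (x - c) - (y - c) := by
      rw [hm]; module
    have := norm_sub_le (x - c) (y - c)
    rw [← h] at this
    rw [norm_smul] at this
    norm_num at this
    linarith
  have hmc : 0 ≤ ‖m - c‖ := norm_nonneg _
  nlinarith [b1, b2, b4, norm_nonneg (x - m)]
end

section
/- In the mixed Deffuant model, suppose at time t the selected pair is e_t = {i,j} and {i,j} ∈ E(t). Then for every c ∈ ℝ^d, with Z_c(t) = Σ_{k∈V} ‖x_k(t) − c‖ and c_{ij}(t) = (x_i(t) + x_j(t))/2, one has Z_c(t) − Z_c(t+1) ≥ 2(‖x_i(t) − x_i(t+1)‖ − ‖c_{ij}(t) − c‖). -/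
open MeasureTheory ProbabilityTheory Filter

open scoped Classical in
/-- One step of the mixed Deffuant model: given confidence threshold `ε`, convergence
parameter `μt`, social edge set `Et` and selected (unordered) pair `p`, each endpoint of `p`
moves toward the other at rate `μt` provided `p` is a social edge and the two opinions are
within distance `ε`; all other agents keep their opinion. -/
noncomputable def deffuantStep {V W : Type*} [NormedAddCommGroup W] [NormedSpace ℝ W]
    (ε μt : ℝ) (Et : Set (Sym2 V)) (p : Sym2 V) (x : V → W) : V → W :=
  fun k =>
    if h : k ∈ p then
      if p ∈ Et ∧ ‖x k - x (Sym2.Mem.other h)‖ ≤ ε then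
        x k + μt • (x (Sym2.Mem.other h) - x k)
      else x k
    else x k

/-- The trajectory of the mixed Deffuant model with confidence threshold `ε`, convergence
parameters `μ`, social edge sets `E`, selected pairs `e` and initial opinions `x0`. -/
noncomputable def deffuantTraj {V W : Type*} [NormedAddCommGroup W] [NormedSpace ℝ W]
    (ε : ℝ) (μ : ℕ → ℝ) (E : ℕ → Set (Sym2 V)) (e : ℕ → Sym2 V) (x0 : V → W) :
    ℕ → V → W
  | 0 => x0
  | t + 1 => deffuantStep ε (μ t) (E t) (e t) (deffuantTraj ε μ E e x0 t)


open scoped Classical in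
lemma sym2_other_left {V : Type*} {i j : V} (hij : i ≠ j) (h : i ∈ (s(i,j) : Sym2 V)) :
    Sym2.Mem.other h = j := by
  have hs := Sym2.other_spec h
  rw [Sym2.eq_iff] at hs
  tauto

open scoped Classical in
lemma sym2_other_right {V : Type*} {i j : V} (hij : i ≠ j) (h : j ∈ (s(i,j) : Sym2 V)) :
    Sym2.Mem.other h = i := by
  have hs := Sym2.other_spec h
  rw [Sym2.eq_iff] at hs
  tauto


/-- In the mixed Deffuant model, if the pair `{i, j}` is selected at time
`t` and `{i, j} ∈ E(t)`, then for every `c`,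
`Z_c(t) - Z_c(t+1) ≥ 2 (‖x_i(t) - x_i(t+1)‖ - ‖c_ij(t) - c‖)` where
`c_ij(t) = (x_i(t) + x_j(t)) / 2`. -/
theorem deffuant_sum_dist_drop
    {d : ℕ} (hd : 1 ≤ d) {V : Type*} [Fintype V] (hV : 2 ≤ Fintype.card V)
    (ε : ℝ) (hε : 0 < ε)
    (μ : ℕ → ℝ) (hμ : ∀ t, μ t ∈ Set.Icc (0 : ℝ) (1 / 2))
    (E : ℕ → Set (Sym2 V)) (e : ℕ → Sym2 V) (he : ∀ t, ¬ (e t).IsDiag)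
    (x0 : V → EuclideanSpace ℝ (Fin d))
    (i j : V) (hij : i ≠ j) (t : ℕ)
    (hsel : e t = s(i, j)) (hsoc : s(i, j) ∈ E t)
    (c : EuclideanSpace ℝ (Fin d)) :
    2 * (‖deffuantTraj ε μ E e x0 t i - deffuantTraj ε μ E e x0 (t + 1) i‖
          - ‖(2 : ℝ)⁻¹ • (deffuantTraj ε μ E e x0 t i + deffuantTraj ε μ E e x0 t j) - c‖) ≤
      (∑ k : V, ‖deffuantTraj ε μ E e x0 t k - c‖)
        - ∑ k : V, ‖deffuantTraj ε μ E e x0 (t + 1) k - c‖ := by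
  classical
  set x : V → EuclideanSpace ℝ (Fin d) := deffuantTraj ε μ E e x0 t with hx
  have hstep : deffuantTraj ε μ E e x0 (t + 1) = deffuantStep ε (μ t) (E t) (s(i,j)) x := by
    rw [hx, deffuantTraj, hsel]
  set y : V → EuclideanSpace ℝ (Fin d) := deffuantTraj ε μ E e x0 (t + 1) with hy
  have hmemi : i ∈ (s(i,j) : Sym2 V) := Sym2.mem_mk_left i j
  have hmemj : j ∈ (s(i,j) : Sym2 V) := Sym2.mem_mk_right i j
  have hyi : y i = if ‖x i - x j‖ ≤ ε then x i + μ t • (x j - x i) else x i := by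
    rw [hstep, deffuantStep]
    simp only [dif_pos hmemi, sym2_other_left hij hmemi]
    by_cases hcond : ‖x i - x j‖ ≤ ε
    · rw [if_pos ⟨hsoc, hcond⟩, if_pos hcond]
    · rw [if_neg (by tauto), if_neg hcond]
  have hyj : y j = if ‖x i - x j‖ ≤ ε then x j + μ t • (x i - x j) else x j := by
    rw [hstep, deffuantStep]
    simp only [dif_pos hmemj, sym2_other_right hij hmemj]
    rw [norm_sub_rev]
    by_cases hcond : ‖x i - x j‖ ≤ ε
    · rw [if_pos ⟨hsoc, hcond⟩, if_pos hcond]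
    · rw [if_neg (by tauto), if_neg hcond]
  have hyk : ∀ k, k ≠ i → k ≠ j → y k = x k := by
    intro k hki hkj
    have hkmem : k ∉ (s(i,j) : Sym2 V) := by
      rw [Sym2.mem_iff]; tauto
    rw [hstep, deffuantStep]
    simp only [dif_neg hkmem]
  have hsum : (∑ k : V, ‖x k - c‖) - ∑ k : V, ‖y k - c‖
      = (‖x i - c‖ - ‖y i - c‖) + (‖x j - c‖ - ‖y j - c‖) := by
    rw [← Finset.sum_sub_distrib]
    exact Finset.sum_eq_add_of_mem i j (Finset.mem_univ i) (Finset.mem_univ j) hij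
      (fun k _ hk => by rw [hyk k hk.1 hk.2]; ring)
  by_cases hcond : ‖x i - x j‖ ≤ ε
  · rw [if_pos hcond] at hyi hyj
    obtain ⟨hμ0, hμ1⟩ := hμ t
    set m : EuclideanSpace ℝ (Fin d) := (2 : ℝ)⁻¹ • (x i + x j) with hm
    set r : ℝ := ‖x i - x j‖ with hr
    have h1 : ‖x i - y i‖ = μ t * r := by
      have : x i - y i = μ t • (x i - x j) := by rw [hyi]; module
      rw [this, norm_smul, Real.norm_eq_abs, abs_of_nonneg hμ0]
    have h2 : ‖y i - m‖ = (1/2 - μ t) * r := by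
      have : y i - m = (1/2 - μ t) • (x i - x j) := by rw [hyi, hm]; module
      rw [this, norm_smul, Real.norm_eq_abs, abs_of_nonneg (by linarith)]
    have h3 : ‖y j - m‖ = (1/2 - μ t) * r := by
      have : y j - m = (1/2 - μ t) • (x j - x i) := by rw [hyj, hm]; module
      rw [this, norm_smul, Real.norm_eq_abs, abs_of_nonneg (by linarith),
        norm_sub_rev]
    have h4 : r ≤ ‖x i - c‖ + ‖x j - c‖ := by
      calc r = ‖(x i - c) - (x j - c)‖ := by rw [hr]; congr 1; abel
        _ ≤ ‖x i - c‖ + ‖x j - c‖ := norm_sub_le _ _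
    have h5 : ‖y i - c‖ ≤ ‖y i - m‖ + ‖m - c‖ := by
      calc ‖y i - c‖ = ‖(y i - m) + (m - c)‖ := by congr 1; abel
        _ ≤ _ := norm_add_le _ _
    have h6 : ‖y j - c‖ ≤ ‖y j - m‖ + ‖m - c‖ := by
      calc ‖y j - c‖ = ‖(y j - m) + (m - c)‖ := by congr 1; abel
        _ ≤ _ := norm_add_le _ _
    rw [hsum, h1]
    linarith [h2, h3, h4, h5, h6]
  · rw [if_neg hcond] at hyi hyj
    rw [hsum, hyi, hyj, sub_self, sub_self, norm_zero]
    simp only [sub_self, add_zero]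
    have := norm_nonneg ((2 : ℝ)⁻¹ • (x i + x j) - c)
    linarith
end

section
/- In the mixed Deffuant model, assume liminf_{t→∞} μ(t) > 0. Then for every δ > 0, almost surely there exists a time t ≥ 0 such that every pair {i,j} ∈ E(t) ∩ 𝓔(t) satisfies ‖x_i(t) − x_j(t)‖ ≤ δ; that is, τ_δ := inf{ t ≥ 0 : ‖x_i(t) − x_j(t)‖ ≤ δ for all {i,j} ∈ E(t) ∩ 𝓔(t) } is finite almost surely. -/
/-!
The energy `∑ k, ‖x k‖ ^ 2` never increases along a trajectory, and when the selected pair is a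
profile edge of length in `(δ, ε]` it drops by at least `μ t * δ ^ 2`. Once `μ t ≥ c > 0`, such
hits can therefore happen only a bounded number `k` of times. As long as a long profile edge
exists, the next selected pair is one of them with probability at least `q = 1 / #pairs`,
independently of the past; so the probability that a long edge survives `L` steps with at most
`k` hits is at most `a ^ k * (1 - q + a⁻¹) ^ L`, which tends to `0` once `a⁻¹ < q`.
-/

open MeasureTheory ProbabilityTheory Filter
open scoped ENNReal

section Dynamics

variable {V W : Type*} [NormedAddCommGroup W] [NormedSpace ℝ W] {ε μt : ℝ} {Et : Set (Sym2 V)}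
  {x : V → W} {i j : V}

theorem deffuantStep_of_notMem {p : Sym2 V} {k : V} (hk : k ∉ p) :
    deffuantStep ε μt Et p x k = x k := by
  rw [deffuantStep, dif_neg hk]

open scoped Classical in
theorem deffuantStep_mk_left :
    deffuantStep ε μt Et s(i, j) x i =
      if s(i, j) ∈ Et ∧ ‖x i - x j‖ ≤ ε then x i + μt • (x j - x i) else x i := by
  have hi : i ∈ s(i, j) := Sym2.mem_mk_left i j
  rw [deffuantStep, dif_pos hi, Sym2.congr_right.mp (Sym2.other_spec hi)]

open scoped Classical in
theorem deffuantStep_mk_right :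
    deffuantStep ε μt Et s(i, j) x j =
      if s(i, j) ∈ Et ∧ ‖x i - x j‖ ≤ ε then x j + μt • (x i - x j) else x j := by
  rw [Sym2.eq_swap, deffuantStep_mk_left, norm_sub_rev]

theorem deffuantStep_mk_eq_self (h : ¬(s(i, j) ∈ Et ∧ ‖x i - x j‖ ≤ ε)) :
    deffuantStep ε μt Et s(i, j) x = x := by
  funext k
  by_cases hk : k ∈ s(i, j)
  · rcases Sym2.mem_iff.mp hk with rfl | rfl
    · rw [deffuantStep_mk_left, if_neg h]
    · rw [deffuantStep_mk_right, if_neg h]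
  · exact deffuantStep_of_notMem hk

theorem deffuantStep_mk_self : deffuantStep ε μt Et s(i, i) x = x := by
  funext k
  by_cases hk : k ∈ s(i, i)
  · obtain rfl : k = i := by simpa using hk
    rw [deffuantStep_mk_left]
    simp
  · exact deffuantStep_of_notMem hk

theorem deffuantTraj_dependsOn (μ : ℕ → ℝ) (E : ℕ → Set (Sym2 V)) (x0 : V → W) (t : ℕ) :
    DependsOn (fun v : ℕ → Sym2 V => deffuantTraj ε μ E v x0 t) (Set.Iio t) := by
  induction t with
  | zero => exact fun _ _ _ => rfl
  | succ t ih =>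
    intro v v' h
    have hprev : deffuantTraj ε μ E v x0 t = deffuantTraj ε μ E v' x0 t :=
      ih fun s hs => h s (Nat.lt_succ_of_lt hs)
    simp only [deffuantTraj]
    rw [hprev, h t (Nat.lt_succ_self t)]

end Dynamics

section Energy

variable {V W : Type*} [NormedAddCommGroup W]

def opinionEnergy [Fintype V] (x : V → W) : ℝ := ∑ k, ‖x k‖ ^ 2

theorem opinionEnergy_nonneg [Fintype V] (x : V → W) : 0 ≤ opinionEnergy x :=
  Finset.sum_nonneg fun _ _ => by positivity

def longProfileEdges (ε δ : ℝ) (Et : Set (Sym2 V)) (x : V → W) : Set (Sym2 V) :=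
  {p | ∃ i j, p = s(i, j) ∧ p ∈ Et ∧ δ < ‖x i - x j‖ ∧ ‖x i - x j‖ ≤ ε}

theorem not_isDiag_of_mem_longProfileEdges {ε δ : ℝ} {Et : Set (Sym2 V)} {x : V → W}
    {p : Sym2 V} (hδ : 0 ≤ δ) (hp : p ∈ longProfileEdges ε δ Et x) : ¬p.IsDiag := by
  obtain ⟨i, j, rfl, -, hlong, -⟩ := hp
  rintro (rfl : i = j)
  simp only [sub_self, norm_zero] at hlong
  linarith

variable [InnerProductSpace ℝ W]

theorem norm_sq_add_norm_sq_compromise (μt : ℝ) (a b : W) :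
    ‖a + μt • (b - a)‖ ^ 2 + ‖b + μt • (a - b)‖ ^ 2
      = ‖a‖ ^ 2 + ‖b‖ ^ 2 - 2 * μt * (1 - μt) * ‖a - b‖ ^ 2 := by
  simp only [← real_inner_self_eq_norm_sq, inner_add_left, inner_add_right, inner_sub_left,
    inner_sub_right, inner_smul_left, inner_smul_right, real_inner_comm a b, RCLike.conj_to_real]
  ring

variable [Fintype V] {ε μt δ : ℝ} {Et : Set (Sym2 V)} {x : V → W}

theorem opinionEnergy_deffuantStep_mk {i j : V} (h : s(i, j) ∈ Et ∧ ‖x i - x j‖ ≤ ε) :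
    opinionEnergy (deffuantStep ε μt Et s(i, j) x)
      = opinionEnergy x - 2 * μt * (1 - μt) * ‖x i - x j‖ ^ 2 := by
  classical
  rcases eq_or_ne i j with rfl | hij
  · simp [deffuantStep_mk_self]
  have hrest : ∀ k ∈ ({i, j} : Finset V)ᶜ,
      ‖deffuantStep ε μt Et s(i, j) x k‖ ^ 2 = ‖x k‖ ^ 2 := by
    intro k hk
    simp only [Finset.mem_compl, Finset.mem_insert, Finset.mem_singleton, not_or] at hk
    rw [deffuantStep_of_notMem (by simpa [Sym2.mem_iff] using hk)]
  rw [opinionEnergy, opinionEnergy, ← Finset.sum_compl_add_sum {i, j},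
    ← Finset.sum_compl_add_sum {i, j} (fun k => ‖x k‖ ^ 2), Finset.sum_congr rfl hrest,
    Finset.sum_pair hij, Finset.sum_pair hij, deffuantStep_mk_left, deffuantStep_mk_right,
    if_pos h, if_pos h, norm_sq_add_norm_sq_compromise]
  ring

theorem opinionEnergy_deffuantStep_le (hμ0 : 0 ≤ μt) (hμ1 : μt ≤ 1) (p : Sym2 V) :
    opinionEnergy (deffuantStep ε μt Et p x) ≤ opinionEnergy x := by
  induction p using Sym2.ind with
  | _ i j =>
    by_cases h : s(i, j) ∈ Et ∧ ‖x i - x j‖ ≤ ε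
    · rw [opinionEnergy_deffuantStep_mk h]
      have : 0 ≤ 2 * μt * (1 - μt) * ‖x i - x j‖ ^ 2 := by
        have := sub_nonneg.mpr hμ1
        positivity
      linarith
    · rw [deffuantStep_mk_eq_self h]

theorem opinionEnergy_deffuantStep_le_sub (hμ : μt ∈ Set.Icc (0 : ℝ) (1 / 2)) (hδ : 0 ≤ δ)
    {p : Sym2 V} (hp : p ∈ longProfileEdges ε δ Et x) :
    opinionEnergy (deffuantStep ε μt Et p x) ≤ opinionEnergy x - μt * δ ^ 2 := by
  obtain ⟨i, j, rfl, hE, hlong, hclose⟩ := hp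
  rw [opinionEnergy_deffuantStep_mk ⟨hE, hclose⟩]
  have hsq : δ ^ 2 ≤ ‖x i - x j‖ ^ 2 := pow_le_pow_left₀ hδ hlong.le 2
  have hfactor : 0 ≤ μt * ‖x i - x j‖ ^ 2 * (1 - 2 * μt) := by
    have := hμ.1
    have : 0 ≤ 1 - 2 * μt := by linarith [hμ.2]
    positivity
  nlinarith [mul_le_mul_of_nonneg_left hsq hμ.1]

end Energy

section HitCount

variable {α : Type*} (G : ℕ → (ℕ → α) → Set α)

open scoped Classical in
noncomputable def hitCount (v : ℕ → α) (L : ℕ) : ℕ :=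
  ((Finset.range L).filter fun s => v s ∈ G s v).card

open scoped Classical in
theorem hitCount_succ (v : ℕ → α) (L : ℕ) :
    hitCount G v (L + 1) = hitCount G v L + if v L ∈ G L v then 1 else 0 := by
  simp only [hitCount, Finset.card_filter, Finset.sum_range_succ]

variable {G}

theorem hitCount_dependsOn (hG : ∀ s, DependsOn (G s) (Set.Iio s)) (L : ℕ) :
    DependsOn (fun v => hitCount G v L) (Set.Iio L) := by
  classical
  intro v w h
  simp only [hitCount]
  congr 1
  refine Finset.filter_congr fun s hs => ?_
  have hsL : s < L := Finset.mem_range.mp hs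
  rw [h s hsL, hG s fun r hr => h r (lt_trans hr hsL)]

end HitCount

section Trajectory

variable {V W : Type*} [Fintype V] [NormedAddCommGroup W] [InnerProductSpace ℝ W]
  (ε : ℝ) {μ : ℕ → ℝ} (E : ℕ → Set (Sym2 V)) (x0 : V → W)

/-- Before `T₀` a hit need not lower the energy by `c * δ ^ 2`; the term `min L T₀` pays for
those hits. -/
theorem opinionEnergy_deffuantTraj_add_hitCount_le (hμ : ∀ t, μ t ∈ Set.Icc (0 : ℝ) (1 / 2))
    {δ c : ℝ} (hδ : 0 ≤ δ) (hc0 : 0 ≤ c) {T₀ : ℕ} (hc : ∀ t, T₀ ≤ t → c ≤ μ t)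
    (v : ℕ → Sym2 V) (L : ℕ) :
    opinionEnergy (deffuantTraj ε μ E v x0 L) + c * δ ^ 2 *
        hitCount (fun s v => longProfileEdges ε δ (E s) (deffuantTraj ε μ E v x0 s)) v L
      ≤ opinionEnergy x0 + c * δ ^ 2 * min L T₀ := by
  induction L with
  | zero => simp [deffuantTraj, hitCount]
  | succ L ih =>
    have hκ : 0 ≤ c * δ ^ 2 := by positivity
    have hle := opinionEnergy_deffuantStep_le (ε := ε) (Et := E L) (x := deffuantTraj ε μ E v x0 L)
      (hμ L).1 (by linarith [(hμ L).2]) (v L)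
    rw [hitCount_succ]
    simp only [deffuantTraj]
    rcases lt_or_ge L T₀ with hL | hL
    · rw [min_eq_left hL.le] at ih
      rw [min_eq_left hL]
      split_ifs <;> push_cast at ih ⊢ <;> nlinarith
    · rw [min_eq_right hL] at ih
      rw [min_eq_right (by omega)]
      split_ifs with hhit
      · have := opinionEnergy_deffuantStep_le_sub (hμ L) hδ hhit
        have := mul_le_mul_of_nonneg_right (hc L hL) (sq_nonneg δ)
        push_cast
        linarith
      · simp only [add_zero]
        linarith

theorem hitCount_longProfileEdges_le (hμ : ∀ t, μ t ∈ Set.Icc (0 : ℝ) (1 / 2)) {δ c : ℝ}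
    (hδ : 0 < δ) (hc : 0 < c) {T₀ : ℕ} (hcμ : ∀ t, T₀ ≤ t → c ≤ μ t) (v : ℕ → Sym2 V)
    (L : ℕ) :
    hitCount (fun s v => longProfileEdges ε δ (E s) (deffuantTraj ε μ E v x0 s)) v L
      ≤ T₀ + ⌈opinionEnergy x0 / (c * δ ^ 2)⌉₊ := by
  have hκ : 0 < c * δ ^ 2 := by positivity
  have hinv := opinionEnergy_deffuantTraj_add_hitCount_le ε E x0 hμ hδ.le hc.le hcμ v L
  have henergy := opinionEnergy_nonneg (deffuantTraj ε μ E v x0 L)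
  have hmin : (min L T₀ : ℝ) ≤ T₀ := by exact_mod_cast min_le_right L T₀
  have hcount : (hitCount (fun s v => longProfileEdges ε δ (E s) (deffuantTraj ε μ E v x0 s)) v L
      : ℝ) ≤ T₀ + opinionEnergy x0 / (c * δ ^ 2) := by
    rw [← sub_le_iff_le_add', le_div_iff₀ hκ]
    push_cast at hinv
    nlinarith
  exact_mod_cast hcount.trans (add_le_add_right (Nat.le_ceil _) _)

end Trajectory

theorem setOf_dependsOn_eq_preimage_image {Ω α : Type*} {e : ℕ → Ω → α} {t : ℕ}
    {F : (ℕ → α) → Prop} (hF : DependsOn F (Set.Iio t)) :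
    {ω | F (e · ω)} = (fun ω (i : Finset.range t) => e i ω) ⁻¹'
      ((fun ω (i : Finset.range t) => e i ω) '' {ω | F (e · ω)}) := by
  refine (Set.subset_preimage_image _ _).antisymm ?_
  rintro ω ⟨ω', hω', hpast⟩
  have hagree : ∀ s ∈ Set.Iio t, e s ω' = e s ω := fun s hs =>
    congrFun hpast ⟨s, Finset.mem_range.mpr hs⟩
  exact (hF hagree).mp hω'

section Probability

open Topology

variable {Ω α : Type*} [MeasurableSpace Ω] [MeasurableSpace α] [MeasurableSingletonClass α]
  [Finite α] {P : Measure Ω} {e : ℕ → Ω → α}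

theorem measurableSet_setOf_dependsOn (hmeas : ∀ s, Measurable (e s)) {t : ℕ}
    {F : (ℕ → α) → Prop} (hF : DependsOn F (Set.Iio t)) : MeasurableSet {ω | F (e · ω)} := by
  rw [setOf_dependsOn_eq_preimage_image hF]
  exact measurable_pi_lambda (fun ω (i : Finset.range t) => e i ω) (fun i => hmeas i) .of_discrete

theorem measure_setOf_dependsOn_inter_preimage_eq_mul (hmeas : ∀ s, Measurable (e s))
    (hindep : iIndepFun e P) {t : ℕ} {F : (ℕ → α) → Prop} (hF : DependsOn F (Set.Iio t))
    (B : Set α) :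
    P ({ω | F (e · ω)} ∩ e t ⁻¹' B) = P {ω | F (e · ω)} * P (e t ⁻¹' B) := by
  have hpast := (hindep.indepFun_finset (Finset.range t) {t} (by simp) hmeas).comp
    measurable_id (measurable_pi_apply ⟨t, Finset.mem_singleton_self t⟩)
  rw [setOf_dependsOn_eq_preimage_image hF]
  exact hpast.measure_inter_preimage_eq_mul _ _ .of_discrete .of_discrete

variable [IsProbabilityMeasure P]

theorem measure_setOf_and_notMem_le (hmeas : ∀ s, Measurable (e s)) (hindep : iIndepFun e P)
    {t : ℕ} {C : (ℕ → α) → Prop} {G : (ℕ → α) → Set α} (hC : DependsOn C (Set.Iio t))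
    (hG : DependsOn G (Set.Iio t)) {q : ℝ≥0∞} (hq : ∀ v, C v → q ≤ P (e t ⁻¹' G v)) :
    P {ω | C (e · ω) ∧ e t ω ∉ G (e · ω)} ≤ (1 - q) * P {ω | C (e · ω)} := by
  set A : Set α → Set Ω := fun S => {ω | C (e · ω) ∧ G (e · ω) = S}
  have hA : ∀ S, DependsOn (fun v => C v ∧ G v = S) (Set.Iio t) := fun S v w h => by
    simp only [hC h, hG h]
  have hmiss : ∀ S, P (A S ∩ e t ⁻¹' Sᶜ) ≤ P (A S) * (1 - q) := by
    intro S
    rcases (A S).eq_empty_or_nonempty with hS | ⟨ω, hCω, rfl⟩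
    · simp [hS]
    · rw [measure_setOf_dependsOn_inter_preimage_eq_mul hmeas hindep (hA _), Set.preimage_compl,
        prob_compl_eq_one_sub (hmeas t .of_discrete)]
      gcongr
      exact hq _ hCω
  have hcover : {ω | C (e · ω)} = ⋃ S, A S := by
    ext ω
    simp [A]
  calc P {ω | C (e · ω) ∧ e t ω ∉ G (e · ω)}
      ≤ P (⋃ S, A S ∩ e t ⁻¹' Sᶜ) :=
        measure_mono fun ω hω => Set.mem_iUnion.mpr ⟨_, ⟨hω.1, rfl⟩, hω.2⟩
    _ ≤ ∑' S, P (A S) * (1 - q) := (measure_iUnion_le _).trans (ENNReal.tsum_le_tsum hmiss)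
    _ = (1 - q) * P {ω | C (e · ω)} := by
      rw [ENNReal.tsum_mul_right, mul_comm, hcover, measure_iUnion _
        fun S => measurableSet_setOf_dependsOn hmeas (hA S)]
      intro S S' hSS'
      exact Set.disjoint_left.mpr fun ω hω hω' => hSS' (hω.2.symm.trans hω'.2)

variable {G : ℕ → (ℕ → α) → Set α} {q : ℝ≥0∞}

theorem measure_forall_nonempty_hitCount_le (hmeas : ∀ s, Measurable (e s))
    (hindep : iIndepFun e P) (hG : ∀ s, DependsOn (G s) (Set.Iio s))
    (hq : ∀ s v, (G s v).Nonempty → q ≤ P (e s ⁻¹' G s v)) {a : ℝ≥0∞} (ha : 1 ≤ a)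
    (ha' : a ≠ ∞) (L k : ℕ) :
    P {ω | (∀ s < L, (G s (e · ω)).Nonempty) ∧ hitCount G (e · ω) L ≤ k}
      ≤ a ^ k * (1 - q + a⁻¹) ^ L := by
  set b := 1 - q + a⁻¹
  -- the recursion `p (L + 1) (k + 1) ≤ (1 - q) * p L (k + 1) + p L k` is solved by `a ^ k * b ^ L`
  have hab : a * b = (1 - q) * a + 1 := by
    rw [mul_add, ENNReal.mul_inv_cancel (by positivity) ha', mul_comm]
  induction L generalizing k with
  | zero => simpa using prob_le_one.trans (one_le_pow₀ ha)
  | succ L ih =>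
    set C : ℕ → (ℕ → α) → Prop := fun k v =>
      (∀ s < L + 1, (G s v).Nonempty) ∧ hitCount G v L ≤ k
    have hC : ∀ k, DependsOn (C k) (Set.Iio L) := by
      intro k v w h
      have hne : (∀ s < L + 1, (G s v).Nonempty) ↔ ∀ s < L + 1, (G s w).Nonempty :=
        forall₂_congr fun s hs => by
          rw [hG s fun r (hr : r < s) => h r (show r < L by omega)]
      have hcount : hitCount G v L = hitCount G w L := hitCount_dependsOn hG L h
      simp only [C, hne, hcount]
    have hmiss : ∀ k, P {ω | C k (e · ω) ∧ e L ω ∉ G L (e · ω)} ≤ (1 - q) * (a ^ k * b ^ L) := by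
      intro k
      have hCsub : {ω | C k (e · ω)} ⊆
          {ω | (∀ s < L, (G s (e · ω)).Nonempty) ∧ hitCount G (e · ω) L ≤ k} :=
        fun ω hω => ⟨fun s hs => hω.1 s (by omega), hω.2⟩
      refine (measure_setOf_and_notMem_le hmeas hindep (hC k) (hG L)
        fun v hv => hq L v (hv.1 L L.lt_succ_self)).trans ?_
      gcongr
      exact (measure_mono hCsub).trans (ih k)
    have hsplit : ∀ ω, (∀ s < L + 1, (G s (e · ω)).Nonempty) →
        hitCount G (e · ω) (L + 1) ≤ k →
        (C k (e · ω) ∧ e L ω ∉ G L (e · ω)) ∨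
          (0 < k ∧ (∀ s < L, (G s (e · ω)).Nonempty) ∧ hitCount G (e · ω) L ≤ k - 1) := by
      intro ω hne hk
      rw [hitCount_succ] at hk
      by_cases hhit : e L ω ∈ G L (e · ω)
      · simp only [hhit, if_true] at hk
        exact .inr ⟨by omega, fun s hs => hne s (by omega), by omega⟩
      · simp only [hhit, if_false] at hk
        exact Or.inl ⟨show C k (e · ω) from ⟨hne, by omega⟩, hhit⟩
    rcases k with _ | k
    · calc _ ≤ P {ω | C 0 (e · ω) ∧ e L ω ∉ G L (e · ω)} :=
            measure_mono fun ω hω => (hsplit ω hω.1 hω.2).resolve_right (by omega)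
        _ ≤ (1 - q) * (a ^ 0 * b ^ L) := hmiss 0
        _ ≤ a ^ 0 * b ^ (L + 1) := by
          rw [pow_zero, one_mul, one_mul, pow_succ, mul_comm]
          gcongr
          exact le_self_add
    · calc _ ≤ P ({ω | C (k + 1) (e · ω) ∧ e L ω ∉ G L (e · ω)} ∪
              {ω | (∀ s < L, (G s (e · ω)).Nonempty) ∧ hitCount G (e · ω) L ≤ k}) :=
            measure_mono fun ω hω => (hsplit ω hω.1 hω.2).imp_right fun h => h.2
        _ ≤ (1 - q) * (a ^ (k + 1) * b ^ L) + a ^ k * b ^ L :=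
            (measure_union_le _ _).trans (add_le_add (hmiss _) (ih k))
        _ = a ^ k * b ^ L * ((1 - q) * a + 1) := by ring
        _ = a ^ (k + 1) * b ^ (L + 1) := by rw [← hab]; ring

theorem measure_forall_nonempty_forall_hitCount_le_eq_zero (hmeas : ∀ s, Measurable (e s))
    (hindep : iIndepFun e P) (hG : ∀ s, DependsOn (G s) (Set.Iio s))
    (hq : ∀ s v, (G s v).Nonempty → q ≤ P (e s ⁻¹' G s v)) (hq0 : q ≠ 0) (k : ℕ) :
    P {ω | (∀ s, (G s (e · ω)).Nonempty) ∧ ∀ L, hitCount G (e · ω) L ≤ k} = 0 := by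
  rcases Set.eq_empty_or_nonempty
    {ω | (∀ s, (G s (e · ω)).Nonempty) ∧ ∀ L, hitCount G (e · ω) L ≤ k} with hempty | ⟨ω, hω, -⟩
  · rw [hempty, measure_empty]
  have hq1 : q ≤ 1 := (hq 0 _ (hω 0)).trans prob_le_one
  set a := q⁻¹ + 1
  have ha' : a ≠ ∞ := ENNReal.add_ne_top.mpr ⟨ENNReal.inv_ne_top.mpr hq0, ENNReal.one_ne_top⟩
  have hb : 1 - q + a⁻¹ < 1 := by
    have hainv : a⁻¹ < q := by
      rw [← inv_inv q, ENNReal.inv_lt_inv]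
      exact ENNReal.lt_add_right (ENNReal.inv_ne_top.mpr hq0) one_ne_zero
    calc 1 - q + a⁻¹ < 1 - q + q := ENNReal.add_lt_add_left (by finiteness) hainv
      _ = 1 := tsub_add_cancel_of_le hq1
  have hlim : Tendsto (fun L => a ^ k * (1 - q + a⁻¹) ^ L) atTop (𝓝 0) := by
    simpa using ENNReal.Tendsto.const_mul (ENNReal.tendsto_pow_atTop_nhds_zero_of_lt_one hb)
      (Or.inr (ENNReal.pow_ne_top ha'))
  refine le_antisymm (ge_of_tendsto' hlim fun L => ?_) bot_le
  have hsub : {ω | (∀ s, (G s (e · ω)).Nonempty) ∧ ∀ L, hitCount G (e · ω) L ≤ k} ⊆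
      {ω | (∀ s < L, (G s (e · ω)).Nonempty) ∧ hitCount G (e · ω) L ≤ k} :=
    fun ω hω => ⟨fun s _ => hω.1 s, hω.2 L⟩
  exact (measure_mono hsub).trans
    (measure_forall_nonempty_hitCount_le hmeas hindep hG hq le_add_self ha' L k)

end Probability

theorem deffuant_profile_edges_short_in_finite_time_general
    {d : ℕ} {V : Type*} [Fintype V]
    {Ω : Type*} [MeasurableSpace Ω] (P : Measure Ω) [IsProbabilityMeasure P]
    (e : ℕ → Ω → Sym2 V)
    (hmeas : ∀ t, @Measurable Ω (Sym2 V) _ ⊤ (e t))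
    (hindep : iIndepFun (m := fun _ : ℕ => (⊤ : MeasurableSpace (Sym2 V))) e P)
    (hunif : ∀ t, ∀ p : Sym2 V, ¬ p.IsDiag →
      P {ω | e t ω = p} = ((Nat.card {q : Sym2 V // ¬ q.IsDiag} : ℝ≥0∞))⁻¹)
    (ε : ℝ)
    (μ : ℕ → ℝ) (hμ : ∀ t, μ t ∈ Set.Icc (0 : ℝ) (1 / 2))
    (hliminf : 0 < Filter.liminf μ Filter.atTop)
    (E : ℕ → Set (Sym2 V))
    (x0 : V → EuclideanSpace ℝ (Fin d))
    (δ : ℝ) (hδ : 0 < δ) :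
    ∀ᵐ ω ∂P, ∃ t : ℕ, ∀ i j : V, s(i, j) ∈ E t →
      ‖deffuantTraj ε μ E (fun s => e s ω) x0 t i
          - deffuantTraj ε μ E (fun s => e s ω) x0 t j‖ ≤ ε →
      ‖deffuantTraj ε μ E (fun s => e s ω) x0 t i
          - deffuantTraj ε μ E (fun s => e s ω) x0 t j‖ ≤ δ := by
  let _ : MeasurableSpace (Sym2 V) := ⊤
  set c := liminf μ atTop / 2
  obtain ⟨T₀, hT₀⟩ : ∃ T₀, ∀ t ≥ T₀, c < μ t := eventually_atTop.mp <|
    eventually_lt_of_lt_liminf (half_lt_self hliminf) (isBoundedUnder_of ⟨0, fun t => (hμ t).1⟩)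
  set G := fun s v => longProfileEdges ε δ (E s) (deffuantTraj ε μ E v x0 s)
  have hG : ∀ s, DependsOn (G s) (Set.Iio s) := fun s v w h => by
    simp only [G, deffuantTraj_dependsOn μ E x0 s h]
  have hq : ∀ s v, (G s v).Nonempty →
      (Nat.card {q : Sym2 V // ¬ q.IsDiag} : ℝ≥0∞)⁻¹ ≤ P (e s ⁻¹' G s v) := by
    rintro s v ⟨p, hp⟩
    rw [← hunif s p (not_isDiag_of_mem_longProfileEdges hδ.le hp)]
    exact measure_mono fun ω (hω : e s ω = p) => by rw [Set.mem_preimage, hω]; exact hp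
  have hnull := measure_forall_nonempty_forall_hitCount_le_eq_zero hmeas hindep hG hq
    (ENNReal.inv_ne_zero.mpr (ENNReal.natCast_ne_top _))
    (T₀ + ⌈opinionEnergy x0 / (c * δ ^ 2)⌉₊)
  refine ae_iff.mpr (measure_mono_null (fun ω hω => ?_) hnull)
  simp only [Set.mem_ofPred_eq, not_exists, not_forall, exists_prop] at hω
  refine ⟨fun t => ?_, hitCount_longProfileEdges_le ε E x0 hμ hδ (half_pos hliminf)
    (fun t ht => (hT₀ t ht).le) _⟩
  obtain ⟨i, j, hE, hclose, hlong⟩ := hω t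
  exact ⟨s(i, j), i, j, rfl, hE, not_le.mp hlong, hclose⟩

/-- Theorem 2 of the paper. If `liminf_{t → ∞} μ(t) > 0`, then for every
`δ > 0`, almost surely there is a time `t` at which every edge of the profile
`E(t) ∩ 𝓔(t)` has length at most `δ`. -/
theorem deffuant_profile_edges_short_in_finite_time
    {d : ℕ} (hd : 1 ≤ d) {V : Type*} [Fintype V] (hV : 2 ≤ Fintype.card V)
    {Ω : Type*} [MeasurableSpace Ω] (P : Measure Ω) [IsProbabilityMeasure P]
    (e : ℕ → Ω → Sym2 V)
    (hmeas : ∀ t, @Measurable Ω (Sym2 V) _ ⊤ (e t))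
    (hindep : iIndepFun (m := fun _ : ℕ => (⊤ : MeasurableSpace (Sym2 V))) e P)
    (hunif : ∀ t, ∀ p : Sym2 V, ¬ p.IsDiag →
      P {ω | e t ω = p} = ((Nat.card {q : Sym2 V // ¬ q.IsDiag} : ℝ≥0∞))⁻¹)
    (ε : ℝ) (hε : 0 < ε)
    (μ : ℕ → ℝ) (hμ : ∀ t, μ t ∈ Set.Icc (0 : ℝ) (1 / 2))
    (hliminf : 0 < Filter.liminf μ Filter.atTop)
    (E : ℕ → Set (Sym2 V))
    (x0 : V → EuclideanSpace ℝ (Fin d))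
    (δ : ℝ) (hδ : 0 < δ) :
    ∀ᵐ ω ∂P, ∃ t : ℕ, ∀ i j : V, s(i, j) ∈ E t →
      ‖deffuantTraj ε μ E (fun s => e s ω) x0 t i
          - deffuantTraj ε μ E (fun s => e s ω) x0 t j‖ ≤ ε →
      ‖deffuantTraj ε μ E (fun s => e s ω) x0 t i
          - deffuantTraj ε μ E (fun s => e s ω) x0 t j‖ ≤ δ :=
  deffuant_profile_edges_short_in_finite_time_general P e hmeas hindep hunif ε μ hμ hliminf E x0 δ
    hδ
end

section
/- Let G be a connected simple graph on a finite vertex set V with |V| = n ≥ 2, let x : V → ℝ^d, let c ∈ ℝ^d, and let r ≥ 0, ε > r, and 0 < η < ε − r; set δ = η/n. Assume: (i) ‖x(j) − c‖ ≤ r for every j ∈ V; (ii) there exists i ∈ V with ‖x(i) − c‖ ≤ ε − r − η; and (iii) every edge {j,k} of G with ‖x(j) − x(k)‖ ≤ ε satisfies ‖x(j) − x(k)‖ ≤ δ. Then every edge {j,k} of G satisfies ‖x(j) − x(k)‖ ≤ δ, and consequently ‖x(j) − x(k)‖ ≤ (n − 1)δ < η < ε for all j, k ∈ V. -/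
/-- Deterministic core of Lemma 4 of the paper: if all points lie in the
closed ball of radius `r` around `c`, some point is within `ε - r - η` of `c`, and every edge
of the connected graph `G` whose endpoints are at distance at most `ε` actually has length at
most `δ = η / n`, then every edge of `G` has length at most `δ`, and consequently any two of
the points are at distance at most `(n - 1) * δ < η < ε`. -/
theorem all_edges_short_of_connected
    {d : ℕ} {V : Type*} [Fintype V] {n : ℕ} (hn : n = Fintype.card V) (hn2 : 2 ≤ n)
    (G : SimpleGraph V) (hG : G.Connected)
    (x : V → EuclideanSpace ℝ (Fin d))
    (c : EuclideanSpace ℝ (Fin d))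
    (r ε η δ : ℝ) (hr : 0 ≤ r) (hεr : r < ε) (hη : 0 < η) (hηε : η < ε - r)
    (hδ : δ = η / n)
    (hball : ∀ j : V, ‖x j - c‖ ≤ r)
    (hi : ∃ i : V, ‖x i - c‖ ≤ ε - r - η)
    (hshort : ∀ j k : V, G.Adj j k → ‖x j - x k‖ ≤ ε → ‖x j - x k‖ ≤ δ) :
    (∀ j k : V, G.Adj j k → ‖x j - x k‖ ≤ δ) ∧
      (∀ j k : V, ‖x j - x k‖ ≤ (n - 1 : ℕ) * δ) ∧
      ((n - 1 : ℕ) * δ < η) ∧ η < ε := by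
  classical
  obtain ⟨i, hi⟩ := hi
  have hnpos : (0:ℝ) < n := by positivity
  have hδpos : 0 < δ := by rw [hδ]; positivity
  have hmδ : ∀ m : ℕ, m < n → (m : ℝ) * δ < η := by
    intro m hm
    rw [hδ]
    rw [mul_div_assoc']
    rw [div_lt_iff₀ hnpos]
    have : (m:ℝ) < n := by exact_mod_cast hm
    nlinarith
  -- key walk induction
  have key : ∀ (a b : V) (p : G.Walk a b) (m : ℕ), m + p.length < n →
      ‖x a - c‖ ≤ ε - r - η + m * δ → ‖x a - x b‖ ≤ p.length * δ := by
    intro a b p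
    induction p with
    | nil => intro m _ _; simp
    | @cons a b' b hadj q ih =>
      intro m hlen ha
      have hedge : ‖x a - x b'‖ ≤ δ := by
        apply hshort _ _ hadj
        have htri : ‖x a - x b'‖ ≤ ‖x a - c‖ + ‖x b' - c‖ := by
          have := dist_triangle (x a) c (x b')
          simpa [dist_eq_norm, norm_sub_rev] using this
        have hmδ' : (m:ℝ) * δ < η := hmδ m (by omega)
        have := hball b'
        linarith
      have hb' : ‖x b' - c‖ ≤ ε - r - η + ((m + 1 : ℕ) : ℝ) * δ := by
        have htri : ‖x b' - c‖ ≤ ‖x a - x b'‖ + ‖x a - c‖ := by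
          have := dist_triangle (x b') (x a) c
          simpa [dist_eq_norm, norm_sub_rev] using this
        push_cast
        linarith
      have hq : ‖x b' - x b‖ ≤ q.length * δ := by
        apply ih (m + 1) _ hb'
        simp only [SimpleGraph.Walk.length_cons] at hlen
        omega
      have htri : ‖x a - x b‖ ≤ ‖x a - x b'‖ + ‖x b' - x b‖ := by
        have := dist_triangle (x a) (x b') (x b)
        simpa [dist_eq_norm] using this
      simp only [SimpleGraph.Walk.length_cons]
      push_cast
      linarith
  -- distance from i to any vertex
  have hfromi : ∀ j : V, ‖x i - x j‖ ≤ (n - 1 : ℕ) * δ := by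
    intro j
    obtain ⟨w⟩ := hG.preconnected i j
    have hp : (w.toPath : G.Walk i j).IsPath := w.toPath.2
    have hlen : (w.toPath : G.Walk i j).length < Fintype.card V := hp.length_lt
    have hlen' : (w.toPath : G.Walk i j).length < n := by omega
    have := key i j w.toPath 0 (by omega) (by simpa using hi)
    have hcast : ((w.toPath : G.Walk i j).length : ℝ) ≤ ((n - 1 : ℕ) : ℝ) := by
      exact_mod_cast Nat.le_pred_of_lt hlen'
    calc ‖x i - x j‖ ≤ (w.toPath : G.Walk i j).length * δ := this
      _ ≤ ((n - 1 : ℕ) : ℝ) * δ := by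
          apply mul_le_mul_of_nonneg_right hcast hδpos.le
  have hn1δ : ((n - 1 : ℕ) : ℝ) * δ < η := hmδ (n - 1) (by omega)
  -- part 1: every edge is short
  have part1 : ∀ j k : V, G.Adj j k → ‖x j - x k‖ ≤ δ := by
    intro j k hadj
    apply hshort _ _ hadj
    have h1 : ‖x j - x k‖ ≤ ‖x j - x i‖ + ‖x i - c‖ + ‖x k - c‖ := by
      have t1 := dist_triangle (x j) (x i) (x k)
      have t2 := dist_triangle (x i) c (x k)
      simp only [dist_eq_norm] at t1 t2
      have : ‖x i - x k‖ ≤ ‖x i - c‖ + ‖x k - c‖ := by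
        calc ‖x i - x k‖ ≤ ‖x i - c‖ + ‖c - x k‖ := t2
          _ = ‖x i - c‖ + ‖x k - c‖ := by rw [norm_sub_rev c]
      linarith
    have h2 : ‖x j - x i‖ ≤ ((n-1:ℕ):ℝ) * δ := by
      rw [norm_sub_rev]; exact hfromi j
    have := hball k
    linarith
  -- bound on walks with all edges short
  have walkbd : ∀ (a b : V) (p : G.Walk a b), ‖x a - x b‖ ≤ p.length * δ := by
    intro a b p
    induction p with
    | nil => simp
    | @cons a b' b hadj q ih =>
      have htri : ‖x a - x b‖ ≤ ‖x a - x b'‖ + ‖x b' - x b‖ := by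
        have := dist_triangle (x a) (x b') (x b)
        simpa [dist_eq_norm] using this
      have := part1 a b' hadj
      simp only [SimpleGraph.Walk.length_cons]
      push_cast
      linarith
  have part2 : ∀ j k : V, ‖x j - x k‖ ≤ ((n - 1 : ℕ):ℝ) * δ := by
    intro j k
    obtain ⟨w⟩ := hG.preconnected j k
    have hp : (w.toPath : G.Walk j k).IsPath := w.toPath.2
    have hlen : (w.toPath : G.Walk j k).length < n := by
      have := hp.length_lt; omega
    have hcast : ((w.toPath : G.Walk j k).length : ℝ) ≤ ((n - 1 : ℕ) : ℝ) := by
      exact_mod_cast Nat.le_pred_of_lt hlen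
    calc ‖x j - x k‖ ≤ (w.toPath : G.Walk j k).length * δ := walkbd j k w.toPath
      _ ≤ ((n - 1 : ℕ) : ℝ) * δ := mul_le_mul_of_nonneg_right hcast hδpos.le
  exact ⟨part1, part2, hn1δ, by linarith⟩
end
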